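/- arXiv:1410.4325 — 2 statements merged into one kernel-verified Lean document; each statement's English description precedes it below -/
import Mathlib

section
/- Let x : T → ℝ be a finitely supported function on the dyadic tree with ‖x‖_{JH} ≤ 1 − 1/n for some integer n ≥ 2. Let t₁,…,tₙ be pairwise distinct nodes, all at the same level ℓ strictly greater than the maximal level of supp(x), and all lying above a common node a whose level exceeds the maximal level of supp(x). For any signs μ₁,…,μₙ ∈ {−1,1}, the function y agreeing with x on supp(x), taking value μᵢ/n at tᵢ, and 0 elsewhere satisfies ‖y‖_{JH} ≤ 1. -/
/-- The tree (ancestor) order on the dyadic tree, coded in `ℕ × ℕ`: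
`(n, i) ≤ (m, j)` iff `n ≤ m` and `(n, i)` is obtained from `(m, j)` by repeatedly
passing to the parent `(m-1, j/2)`. -/
def dLe (a b : ℕ × ℕ) : Prop := a.1 ≤ b.1 ∧ b.2 / 2 ^ (b.1 - a.1) = a.2

/-- A `p–q` segment in the dyadic tree: a totally ordered finite set of valid nodes
containing exactly one node at each level `k` with `p ≤ k ≤ q` and nothing else. -/
def IsPQSegD (S : Finset (ℕ × ℕ)) (p q : ℕ) : Prop :=
  (∀ t ∈ S, t.2 < 2 ^ t.1) ∧
  (∀ t ∈ S, p ≤ t.1 ∧ t.1 ≤ q) ∧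
  (∀ k : ℕ, p ≤ k → k ≤ q → ∃! t, t ∈ S ∧ t.1 = k) ∧
  (∀ s ∈ S, ∀ t ∈ S, dLe s t ∨ dLe t s)

/-- An admissible family of segments: pairwise disjoint `p–q` segments for a common pair
`p ≤ q`. -/
def AdmissibleD (F : Finset (Finset (ℕ × ℕ))) : Prop :=
  ∃ p q : ℕ, p ≤ q ∧ (∀ S ∈ F, IsPQSegD S p q) ∧
    ∀ S ∈ F, ∀ S' ∈ F, S ≠ S' → Disjoint S S'

/-- The `JH` norm of a finitely supported function on the dyadic tree. -/
noncomputable def jhNorm (x : (ℕ × ℕ) →₀ ℝ) : ℝ :=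
  sSup {r : ℝ | ∃ F : Finset (Finset (ℕ × ℕ)), AdmissibleD F ∧
    r = ∑ S ∈ F, |∑ t ∈ S, x t|}

/-!
Fix an admissible family of `p–q` segments. The sum of `y` over a segment splits into the sum of
`x` plus the sum of the new values `μᵢ/n`, and since the segments are disjoint the new values
contribute at most `#{i | tᵢ is covered by the family} / n`.
If `p ≤ lev a`, a segment through some `tᵢ` also passes through its ancestor `a`; by disjointness
only one segment meets the `tᵢ`, and it meets exactly one of them since they share a level. So
the family sees at most `‖x‖ + 1/n ≤ 1`. If `p > lev a`, the segments miss `supp x` altogether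
and the family sees at most `n · 1/n = 1`.
-/

open Finset

section DisjointSums

variable {α : Type*} [DecidableEq α]

theorem sum_abs_sum_le_sum_abs_biUnion {F : Finset (Finset α)}
    (hF : (F : Set (Finset α)).PairwiseDisjoint id) (x : α → ℝ) :
    ∑ S ∈ F, |∑ s ∈ S, x s| ≤ ∑ s ∈ F.biUnion id, |x s| := by
  rw [sum_biUnion hF]
  exact sum_le_sum fun S _ => abs_sum_le_sum_abs _ _

theorem Finsupp.sum_abs_le_sum_support_abs (x : α →₀ ℝ) (U : Finset α) :
    ∑ s ∈ U, |x s| ≤ ∑ s ∈ x.support, |x s| := by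
  calc ∑ s ∈ U, |x s| = ∑ s ∈ U ∩ x.support, |x s| := by
        refine (sum_subset inter_subset_left fun s hsU hs => ?_).symm
        simp_all
    _ ≤ ∑ s ∈ x.support, |x s| :=
        sum_le_sum_of_subset_of_nonneg inter_subset_right fun _ _ _ => abs_nonneg _

theorem sum_abs_sum_single_apply_le {ι : Type*} [Fintype ι] (t : ι → α) (c : ι → ℝ)
    (U : Finset α) :
    ∑ s ∈ U, |(∑ i, Finsupp.single (t i) (c i)) s| ≤ ∑ i with t i ∈ U, |c i| := by
  calc ∑ s ∈ U, |(∑ i, Finsupp.single (t i) (c i)) s|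
      ≤ ∑ s ∈ U, ∑ i, |Finsupp.single (t i) (c i) s| := by
        refine sum_le_sum fun s _ => ?_
        rw [Finsupp.finsetSum_apply]
        exact abs_sum_le_sum_abs _ _
    _ = ∑ i with t i ∈ U, |c i| := by
        rw [sum_comm, sum_filter]
        refine sum_congr rfl fun i _ => ?_
        simp only [Finsupp.single_apply, apply_ite (fun r : ℝ => |r|), abs_zero]
        exact sum_ite_eq U (t i) fun _ => |c i|

end DisjointSums

theorem dLe.eq_of_fst_eq {s t : ℕ × ℕ} (h : dLe s t) (hst : s.1 = t.1) : s = t := by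
  obtain ⟨-, h⟩ := h
  rw [hst, Nat.sub_self, pow_zero, Nat.div_one] at h
  exact Prod.ext hst h.symm

theorem dLe.eq_of_dLe_of_fst_eq {u a t : ℕ × ℕ} (hu : dLe u t) (ha : dLe a t)
    (hua : u.1 = a.1) : u = a :=
  Prod.ext hua (by rw [← hu.2, ← ha.2, hua])

namespace IsPQSegD

variable {S : Finset (ℕ × ℕ)} {p q : ℕ}

theorem eq_of_fst_eq (hS : IsPQSegD S p q) {s s' : ℕ × ℕ} (hs : s ∈ S) (hs' : s' ∈ S)
    (h : s.1 = s'.1) : s = s' := by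
  obtain ⟨hp, hq⟩ := hS.2.1 s hs
  exact (hS.2.2.1 s.1 hp hq).unique ⟨hs, rfl⟩ ⟨hs', h.symm⟩

theorem mem_of_dLe (hS : IsPQSegD S p q) {a t : ℕ × ℕ} (ht : t ∈ S) (hat : dLe a t)
    (hpa : p ≤ a.1) : a ∈ S := by
  obtain ⟨u, ⟨huS, hua⟩, -⟩ := hS.2.2.1 a.1 hpa (hat.1.trans (hS.2.1 t ht).2)
  rcases hS.2.2.2 u huS t ht with hut | htu
  · rwa [← hut.eq_of_dLe_of_fst_eq hat hua]
  · rwa [hat.eq_of_fst_eq (le_antisymm hat.1 (hua ▸ htu.1))]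

theorem sum_eq_zero_of_support_lt (hS : IsPQSegD S p q) {x : (ℕ × ℕ) →₀ ℝ}
    (hx : ∀ s ∈ x.support, s.1 < p) : ∑ s ∈ S, x s = 0 :=
  sum_eq_zero fun s hs => Finsupp.notMem_support_iff.mp fun hsx =>
    (hx s hsx).not_ge (hS.2.1 s hs).1

end IsPQSegD

theorem AdmissibleD.pairwiseDisjoint {F : Finset (Finset (ℕ × ℕ))} (hF : AdmissibleD F) :
    (F : Set (Finset (ℕ × ℕ))).PairwiseDisjoint id := by
  obtain ⟨-, -, -, -, hdisj⟩ := hF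
  exact fun S hS S' hS' => hdisj S hS S' hS'

theorem sum_abs_sum_le_jhNorm (x : (ℕ × ℕ) →₀ ℝ) {F : Finset (Finset (ℕ × ℕ))}
    (hF : AdmissibleD F) : ∑ S ∈ F, |∑ s ∈ S, x s| ≤ jhNorm x := by
  refine le_csSup ⟨∑ s ∈ x.support, |x s|, ?_⟩ ⟨F, hF, rfl⟩
  rintro r ⟨G, hG, rfl⟩
  exact (sum_abs_sum_le_sum_abs_biUnion hG.pairwiseDisjoint x).trans
    (x.sum_abs_le_sum_support_abs _)

theorem jhNorm_le_of_forall_admissible {x : (ℕ × ℕ) →₀ ℝ} {c : ℝ} (hc : 0 ≤ c)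
    (h : ∀ F, AdmissibleD F → ∑ S ∈ F, |∑ s ∈ S, x s| ≤ c) : jhNorm x ≤ c :=
  Real.sSup_le (by rintro r ⟨F, hF, rfl⟩; exact h F hF) hc

theorem card_filter_mem_biUnion_le_one_of_le_fst {ι : Type*} [Fintype ι]
    {F : Finset (Finset (ℕ × ℕ))} {p q : ℕ} (hseg : ∀ S ∈ F, IsPQSegD S p q)
    (hdisj : ∀ S ∈ F, ∀ S' ∈ F, S ≠ S' → Disjoint S S') {a : ℕ × ℕ} (hpa : p ≤ a.1)
    {t : ι → ℕ × ℕ} (htinj : Function.Injective t) {L : ℕ} (hlev : ∀ i, (t i).1 = L)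
    (habove : ∀ i, dLe a (t i)) :
    #{i | t i ∈ F.biUnion id} ≤ 1 := by
  refine card_le_one.mpr fun i hi j hj => ?_
  simp only [mem_filter, mem_univ, true_and, mem_biUnion, id] at hi hj
  obtain ⟨S, hS, hiS⟩ := hi
  obtain ⟨S', hS', hjS'⟩ := hj
  have hSS' : S = S' := by
    by_contra hne
    exact disjoint_left.mp (hdisj S hS S' hS' hne) ((hseg S hS).mem_of_dLe hiS (habove i) hpa)
      ((hseg S' hS').mem_of_dLe hjS' (habove j) hpa)
  subst hSS'
  exact htinj ((hseg S hS).eq_of_fst_eq hiS hjS' ((hlev i).trans (hlev j).symm))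

theorem stmt4_general (x : (ℕ × ℕ) →₀ ℝ)
    (n : ℕ) (hx : jhNorm x ≤ 1 - 1 / (n : ℝ))
    (a : ℕ × ℕ) (ha : ∀ s ∈ x.support, s.1 < a.1)
    (L : ℕ)
    (t : Fin n → ℕ × ℕ)
    (htinj : Function.Injective t)
    (hlev : ∀ i, (t i).1 = L)
    (habove : ∀ i, dLe a (t i) ∧ a ≠ t i)
    (μ : Fin n → ℝ) (hμ : ∀ i, μ i = 1 ∨ μ i = -1)
    (y : (ℕ × ℕ) →₀ ℝ)
    (hy : y = x + ∑ i, Finsupp.single (t i) (μ i / (n : ℝ))) :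
    jhNorm y ≤ 1 := by
  refine jhNorm_le_of_forall_admissible zero_le_one fun F hF => ?_
  set z := ∑ i, Finsupp.single (t i) (μ i / (n : ℝ))
  have hμn : ∀ i, |μ i / n| = 1 / n := fun i => by
    rcases hμ i with h | h <;> simp [h, abs_div]
  have hz : ∑ S ∈ F, |∑ s ∈ S, z s| ≤ #{i | t i ∈ F.biUnion id} * (1 / n) := by
    refine (sum_abs_sum_le_sum_abs_biUnion hF.pairwiseDisjoint z).trans
      ((sum_abs_sum_single_apply_le t _ _).trans_eq ?_)
    rw [sum_congr rfl fun i _ => hμn i, sum_const, nsmul_eq_mul]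
  have hsplit : ∑ S ∈ F, |∑ s ∈ S, y s|
      ≤ ∑ S ∈ F, |∑ s ∈ S, x s| + ∑ S ∈ F, |∑ s ∈ S, z s| := by
    rw [← sum_add_distrib, hy]
    exact sum_le_sum fun S _ => by
      simpa only [Finsupp.add_apply, sum_add_distrib] using abs_add_le _ _
  have hxF := sum_abs_sum_le_jhNorm x hF
  obtain ⟨p, q, -, hseg, hdisj⟩ := hF
  rcases le_or_gt p a.1 with hpa | hap
  · have hcard := card_filter_mem_biUnion_le_one_of_le_fst hseg hdisj hpa htinj hlev
      fun i => (habove i).1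
    have hz' : ∑ S ∈ F, |∑ s ∈ S, z s| ≤ 1 / n :=
      hz.trans (mul_le_of_le_one_left (by positivity) (by exact_mod_cast hcard))
    linarith
  · have hx0 : ∑ S ∈ F, |∑ s ∈ S, x s| = 0 := sum_eq_zero fun S hS => by
      rw [(hseg S hS).sum_eq_zero_of_support_lt fun s hs => (ha s hs).trans hap, abs_zero]
    have hcard : (#{i | t i ∈ F.biUnion id} : ℝ) ≤ n := by
      exact_mod_cast (card_filter_le _ _).trans_eq (card_fin n)
    calc ∑ S ∈ F, |∑ s ∈ S, y s| ≤ #{i | t i ∈ F.biUnion id} * (1 / n) := by linarith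
      _ ≤ n * (1 / n) := by gcongr
      _ ≤ 1 := by rw [mul_one_div]; exact div_self_le_one _

/-- If `‖x‖_{JH} ≤ 1 - 1/n` (`n ≥ 2`) and `t₁, …, tₙ` are pairwise
distinct nodes at a common level `L` above the support of `x`, all lying strictly above a
common node `a` whose level exceeds the maximal level of `supp x`, then the function `y`
obtained from `x` by adding the values `μᵢ/n` (with `μᵢ ∈ {-1,1}`) at the nodes `tᵢ`
satisfies `‖y‖_{JH} ≤ 1`. -/
theorem stmt4 (x : (ℕ × ℕ) →₀ ℝ) (hxval : ∀ s ∈ x.support, s.2 < 2 ^ s.1)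
    (n : ℕ) (hn : 2 ≤ n) (hx : jhNorm x ≤ 1 - 1 / (n : ℝ))
    (a : ℕ × ℕ) (hav : a.2 < 2 ^ a.1) (ha : ∀ s ∈ x.support, s.1 < a.1)
    (L : ℕ) (hL : ∀ s ∈ x.support, s.1 < L)
    (t : Fin n → ℕ × ℕ) (htval : ∀ i, (t i).2 < 2 ^ (t i).1)
    (htinj : Function.Injective t)
    (hlev : ∀ i, (t i).1 = L)
    (habove : ∀ i, dLe a (t i) ∧ a ≠ t i)
    (μ : Fin n → ℝ) (hμ : ∀ i, μ i = 1 ∨ μ i = -1)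
    (y : (ℕ × ℕ) →₀ ℝ)
    (hy : y = x + ∑ i, Finsupp.single (t i) (μ i / (n : ℝ))) :
    jhNorm y ≤ 1 :=
  stmt4_general x n hx a ha L t htinj hlev habove μ hμ y hy
end

section
/- Let M be the closed subspace of JH_∞ obtained as the completion of the finitely supported functions on T vanishing at the root ∅. Then the set A of functionals Σᵢ λᵢ f_{Sᵢ}, where λᵢ ∈ {−1,1} and {S₁,…,Sₙ} is an admissible family of segments none of which contains ∅, is a norming subset of B_{M*}; hence B_{M*} is the w*-closed convex hull of A. -/
open Metric

/-- A segment in the tree `T` of finite sequences of naturals: a finite subset totally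
ordered under the prefix (extension) order. -/
def SegL (S : Finset (List ℕ)) : Prop :=
  ∀ s ∈ S, ∀ t ∈ S, s <+: t ∨ t <+: s

/-- An `n–m` segment: a nonempty segment whose least element has level (length) `n` and
whose greatest element has level `m`. -/
def IsNMSeg (S : Finset (List ℕ)) (n m : ℕ) : Prop :=
  SegL S ∧ (∀ t ∈ S, n ≤ t.length ∧ t.length ≤ m) ∧
    (∃ t ∈ S, t.length = n) ∧ (∃ t ∈ S, t.length = m)

/-- An admissible family of segments: pairwise disjoint `n–m` segments for a common pair
`n ≤ m`. -/
def AdmissibleL (F : Finset (Finset (List ℕ))) : Prop :=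
  ∃ n m : ℕ, n ≤ m ∧ (∀ S ∈ F, IsNMSeg S n m) ∧
    ∀ S ∈ F, ∀ S' ∈ F, S ≠ S' → Disjoint S S'

/-- The `JH_∞` norm of a finitely supported function on `T`. -/
noncomputable def jhInfNorm (x : (List ℕ) →₀ ℝ) : ℝ :=
  sSup {r : ℝ | ∃ F : Finset (Finset (List ℕ)), AdmissibleL F ∧
    r = ∑ S ∈ F, |∑ t ∈ S, x t|}

/-!
For `x` vanishing at the root, the supremum defining `‖x‖` may be taken over admissible families
avoiding the root: a segment through `∅` starts at level `0`, so by disjointness it is the only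
member of its family, and deleting `∅` from it changes neither its sum nor its being a segment.
Choosing signs `λᵢ = sign (Σ_{t∈Sᵢ} x(t))` then gives functionals in `A` nearly attaining `‖x‖`,
while `|Σᵢ λᵢ f_{Sᵢ}(x)| ≤ ‖x‖` by the definition of the norm; both facts pass from the dense span
of the `e t` to all of `M`. Finally, a norming subset of the unit ball of `M*` has the whole ball
as its w*-closed convex hull, by Hahn–Banach in `(M*, w*)`, whose dual is `M`.
-/

theorem SegL.mono {S T : Finset (List ℕ)} (hS : SegL S) (hTS : T ⊆ S) : SegL T :=
  fun s hs t ht => hS s (hTS hs) t (hTS ht)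

theorem SegL.exists_isNMSeg {S : Finset (List ℕ)} (hS : SegL S) (hne : S.Nonempty) :
    ∃ n m, n ≤ m ∧ IsNMSeg S n m := by
  have hL : (S.image List.length).Nonempty := hne.image _
  obtain ⟨s, hs, hsn⟩ := Finset.mem_image.1 ((S.image List.length).min'_mem hL)
  obtain ⟨t, ht, htm⟩ := Finset.mem_image.1 ((S.image List.length).max'_mem hL)
  refine ⟨_, _, Finset.min'_le _ _ (Finset.max'_mem _ hL), hS,
    fun u hu => ⟨Finset.min'_le _ _ (Finset.mem_image_of_mem _ hu),
      Finset.le_max' _ _ (Finset.mem_image_of_mem _ hu)⟩, ⟨s, hs, hsn⟩, ⟨t, ht, htm⟩⟩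

theorem admissibleL_empty : AdmissibleL ∅ :=
  ⟨0, 0, le_rfl, by simp, by simp⟩

theorem admissibleL_singleton {S : Finset (List ℕ)} (hS : SegL S) (hne : S.Nonempty) :
    AdmissibleL {S} := by
  obtain ⟨n, m, hnm, hSnm⟩ := hS.exists_isNMSeg hne
  exact ⟨n, m, hnm, by simpa using hSnm, by simp⟩

theorem AdmissibleL.segL {F : Finset (Finset (List ℕ))} (hF : AdmissibleL F)
    {S : Finset (List ℕ)} (hS : S ∈ F) : SegL S := by
  obtain ⟨n, m, -, hseg, -⟩ := hF
  exact (hseg S hS).1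

theorem AdmissibleL.eq_singleton_of_nil_mem {F : Finset (Finset (List ℕ))} (hF : AdmissibleL F)
    {S₀ : Finset (List ℕ)} (hS₀F : S₀ ∈ F) (hS₀ : [] ∈ S₀) : F = {S₀} := by
  obtain ⟨n, m, -, hseg, hdisj⟩ := hF
  have hn : n = 0 := by simpa using ((hseg S₀ hS₀F).2.1 [] hS₀).1
  refine Finset.eq_singleton_iff_unique_mem.2 ⟨hS₀F, fun S hS => ?_⟩
  obtain ⟨t, htS, htn⟩ := (hseg S hS).2.2.1
  obtain rfl : t = [] := List.length_eq_zero_iff.1 (htn.trans hn)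
  by_contra hne
  exact Finset.disjoint_left.1 (hdisj S hS S₀ hS₀F hne) htS hS₀

theorem AdmissibleL.sum_abs_sum_le {F : Finset (Finset (List ℕ))} (hF : AdmissibleL F)
    (x : List ℕ →₀ ℝ) : ∑ S ∈ F, |∑ t ∈ S, x t| ≤ ∑ t ∈ x.support, |x t| := by
  obtain ⟨n, m, -, -, hdisj⟩ := hF
  have hdisj' : (F : Set (Finset (List ℕ))).PairwiseDisjoint fun S => {t ∈ S | x t ≠ 0} :=
    fun S hS S' hS' hne => (hdisj S hS S' hS' hne).mono (Finset.filter_subset _ _)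
      (Finset.filter_subset _ _)
  calc ∑ S ∈ F, |∑ t ∈ S, x t| = ∑ S ∈ F, |∑ t ∈ S with x t ≠ 0, x t| := by
        simp_rw [Finset.sum_filter_ne_zero]
    _ ≤ ∑ S ∈ F, ∑ t ∈ S with x t ≠ 0, |x t| :=
        Finset.sum_le_sum fun S _ => Finset.abs_sum_le_sum_abs _ _
    _ = ∑ t ∈ F.biUnion fun S => {t ∈ S | x t ≠ 0}, |x t| := (Finset.sum_biUnion hdisj').symm
    _ ≤ ∑ t ∈ x.support, |x t| :=
        Finset.sum_le_sum_of_subset_of_nonneg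
          (Finset.biUnion_subset.2 fun _ _ _ ht =>
            Finsupp.mem_support_iff.2 (Finset.mem_filter.1 ht).2)
          fun _ _ _ => abs_nonneg _

theorem AdmissibleL.sum_abs_sum_le_jhInfNorm {F : Finset (Finset (List ℕ))}
    (hF : AdmissibleL F) (x : List ℕ →₀ ℝ) : ∑ S ∈ F, |∑ t ∈ S, x t| ≤ jhInfNorm x :=
  le_csSup ⟨_, by rintro r ⟨F', hF', rfl⟩; exact hF'.sum_abs_sum_le x⟩ ⟨F, hF, rfl⟩

theorem AdmissibleL.abs_sum_sign_mul_le_jhInfNorm {F : Finset (Finset (List ℕ))}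
    (hF : AdmissibleL F) {σ : Finset (List ℕ) → ℝ} (hσ : ∀ S ∈ F, σ S = 1 ∨ σ S = -1)
    (x : List ℕ →₀ ℝ) : |∑ S ∈ F, σ S * ∑ t ∈ S, x t| ≤ jhInfNorm x :=
  calc |∑ S ∈ F, σ S * ∑ t ∈ S, x t| ≤ ∑ S ∈ F, |σ S * ∑ t ∈ S, x t| :=
        Finset.abs_sum_le_sum_abs _ _
    _ = ∑ S ∈ F, |∑ t ∈ S, x t| := Finset.sum_congr rfl fun S hS => by
        rcases hσ S hS with h | h <;> simp [h]
    _ ≤ jhInfNorm x := hF.sum_abs_sum_le_jhInfNorm x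

theorem exists_admissibleL_lt_sum_abs_sum (x : List ℕ →₀ ℝ) {δ : ℝ} (hδ : 0 < δ) :
    ∃ F, AdmissibleL F ∧ jhInfNorm x - δ < ∑ S ∈ F, |∑ t ∈ S, x t| := by
  obtain ⟨_, ⟨F, hF, rfl⟩, hlt⟩ :=
    exists_lt_of_lt_csSup (by exact ⟨0, ∅, admissibleL_empty, by simp⟩)
      (sub_lt_self (jhInfNorm x) hδ)
  exact ⟨F, hF, hlt⟩

theorem AdmissibleL.exists_nil_notMem {F : Finset (Finset (List ℕ))} (hF : AdmissibleL F)
    {x : List ℕ →₀ ℝ} (hx : x [] = 0) :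
    ∃ F', AdmissibleL F' ∧ (∀ S ∈ F', [] ∉ S) ∧
      ∑ S ∈ F, |∑ t ∈ S, x t| ≤ ∑ S ∈ F', |∑ t ∈ S, x t| := by
  by_cases hroot : ∀ S ∈ F, [] ∉ S
  · exact ⟨F, hF, hroot, le_rfl⟩
  push Not at hroot
  obtain ⟨S₀, hS₀F, hS₀⟩ := hroot
  rw [hF.eq_singleton_of_nil_mem hS₀F hS₀, Finset.sum_singleton, ← Finset.sum_erase S₀ hx]
  rcases (S₀.erase []).eq_empty_or_nonempty with hempty | hne
  · exact ⟨∅, admissibleL_empty, by simp, by simp [hempty]⟩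
  · refine ⟨{S₀.erase []}, admissibleL_singleton ((hF.segL hS₀F).mono (S₀.erase_subset _)) hne,
      by simp, by simp⟩

theorem exists_admissibleL_nil_notMem_lt_sum_sign_mul (x : List ℕ →₀ ℝ) (hx : x [] = 0)
    {δ : ℝ} (hδ : 0 < δ) :
    ∃ (F : Finset (Finset (List ℕ))) (σ : Finset (List ℕ) → ℝ), AdmissibleL F ∧
      (∀ S ∈ F, [] ∉ S) ∧ (∀ S ∈ F, σ S = 1 ∨ σ S = -1) ∧
      jhInfNorm x - δ < ∑ S ∈ F, σ S * ∑ t ∈ S, x t := by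
  obtain ⟨F₀, hF₀, hlt⟩ := exists_admissibleL_lt_sum_abs_sum x hδ
  obtain ⟨F, hF, hroot, hle⟩ := hF₀.exists_nil_notMem hx
  refine ⟨F, fun S => if 0 ≤ ∑ t ∈ S, x t then 1 else -1, hF, hroot,
    fun S _ => by dsimp only; split_ifs <;> simp, hlt.trans_le (hle.trans_eq ?_)⟩
  refine Finset.sum_congr rfl fun S _ => ?_
  dsimp only
  split_ifs with h
  · rw [one_mul, abs_of_nonneg h]
  · rw [neg_one_mul, abs_of_neg (not_le.1 h)]

section Dual

variable {X : Type*} [NormedAddCommGroup X] [NormedSpace ℝ X]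

theorem ContinuousLinearMap.opNorm_le_of_dense {Y : Type*} [NormedAddCommGroup Y]
    [NormedSpace ℝ Y] (f : X →L[ℝ] Y) {s : Set X} (hs : Dense s) {C : ℝ} (hC : 0 ≤ C)
    (h : ∀ x ∈ s, ‖f x‖ ≤ C * ‖x‖) : ‖f‖ ≤ C :=
  f.opNorm_le_bound hC <| hs.induction h <| isClosed_le (by fun_prop) (by fun_prop)

theorem exists_lt_apply_of_dense {A : Set (StrongDual ℝ X)} (hA : A ⊆ closedBall 0 1)
    {s : Set X} (hs : Dense s) (h : ∀ w ∈ s, ∀ ε > 0, ∃ g ∈ A, ‖w‖ - ε < g w) :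
    ∀ x : X, ∀ ε > 0, ∃ g ∈ A, ‖x‖ - ε < g x := by
  intro x ε hε
  obtain ⟨w, hws, hxw⟩ := Metric.mem_closure_iff.1 (hs x) (ε / 3) (by positivity)
  obtain ⟨g, hgA, hgw⟩ := h w hws (ε / 3) (by positivity)
  refine ⟨g, hgA, ?_⟩
  have hg : |g (x - w)| ≤ ‖x - w‖ := by
    simpa using g.le_of_opNorm_le (mem_closedBall_zero_iff.1 (hA hgA)) (x - w)
  have hw : ‖x‖ - ‖w‖ ≤ ‖x - w‖ := norm_sub_norm_le x w
  rw [map_sub] at hg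
  rw [dist_eq_norm] at hxw
  linarith [(abs_le.1 hg).1]

theorem StrongDual.toWeakDual_image_closedBall (r : ℝ) :
    StrongDual.toWeakDual '' closedBall (0 : StrongDual ℝ X) r =
      WeakDual.toStrongDual ⁻¹' closedBall 0 r :=
  StrongDual.toWeakDual.image_eq_preimage_symm _

theorem closure_toWeakDual_convexHull_eq_closedBall {A : Set (StrongDual ℝ X)}
    (hA : A ⊆ closedBall 0 1) (hnorming : ∀ x : X, ∀ ε > 0, ∃ g ∈ A, ‖x‖ - ε < g x) :
    closure (StrongDual.toWeakDual '' convexHull ℝ A) =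
      StrongDual.toWeakDual '' closedBall 0 1 := by
  rw [StrongDual.toWeakDual_image_closedBall]
  refine (closure_minimal ?_ (WeakDual.isClosed_closedBall 0 1)).antisymm ?_
  · rw [← StrongDual.toWeakDual_image_closedBall]
    exact Set.image_mono (convexHull_min hA (convex_closedBall 0 1))
  intro g₀ hg₀
  by_contra hg₀K
  have : LocallyConvexSpace ℝ (WeakDual ℝ X) := WeakBilin.locallyConvexSpace
  have hconv : Convex ℝ (closure (StrongDual.toWeakDual '' convexHull ℝ A)) :=
    ((convex_convexHull ℝ A).linear_image StrongDual.toWeakDual.toLinearMap).closure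
  obtain ⟨φ, u, hφK, hφg₀⟩ := geometric_hahn_banach_closed_point hconv isClosed_closure hg₀K
  obtain ⟨x, rfl⟩ := LinearMap.dualEmbedding_surjective (topDualPairing ℝ X) φ
  change u < g₀ x at hφg₀
  have hg₀x : g₀ x ≤ ‖x‖ := le_of_abs_le <| by
    simpa using (WeakDual.toStrongDual g₀).le_of_opNorm_le (mem_closedBall_zero_iff.1 hg₀) x
  obtain ⟨g, hgA, hgx⟩ := hnorming x (‖x‖ - u) (by linarith)
  have hgu : g x < u := hφK _ (subset_closure ⟨g, subset_convexHull ℝ A hgA, rfl⟩)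
  linarith

end Dual

theorem exists_finsupp_of_mem_span {X : Type*} [AddCommGroup X] [Module ℝ X] {e : List ℕ → X}
    {w : X} (hw : w ∈ Submodule.span ℝ (e '' {t : List ℕ | t ≠ []})) :
    ∃ l : List ℕ →₀ ℝ, l [] = 0 ∧ ∑ t ∈ l.support, l t • e t = w := by
  obtain ⟨l, hl, rfl⟩ := (Finsupp.mem_span_image_iff_linearCombination ℝ).1 hw
  refine ⟨l, ?_, rfl⟩
  by_contra h
  exact (Finsupp.mem_supported ℝ l).1 hl (Finsupp.mem_support_iff.2 h) rfl

theorem apply_sum_smul_eq_sum_of_apply_eq_indicator {X : Type*} [AddCommGroup X] [Module ℝ X]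
    {e : List ℕ → X} {S : Finset (List ℕ)} (f : X →ₗ[ℝ] ℝ)
    (hf : ∀ t, t ≠ [] → f (e t) = if t ∈ S then 1 else 0) {l : List ℕ →₀ ℝ} (hl : l [] = 0) :
    f (∑ t ∈ l.support, l t • e t) = ∑ t ∈ S, l t := by
  have hterm : ∀ t ∈ l.support, f (l t • e t) = if t ∈ S then l t else 0 := fun t ht => by
    have ht : t ≠ [] := by rintro rfl; exact Finsupp.mem_support_iff.1 ht hl
    simp [hf t ht]
  rw [map_sum, Finset.sum_congr rfl hterm, Finset.sum_ite_mem, Finset.inter_comm]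
  refine Finset.sum_subset Finset.inter_subset_left fun t hS ht => ?_
  simpa [hS] using ht

theorem AdmissibleL.sum_smul_apply_sum_smul {X : Type*} [NormedAddCommGroup X]
    [NormedSpace ℝ X] {e : List ℕ → X} {fS : Finset (List ℕ) → X →L[ℝ] ℝ}
    (hfS : ∀ S, SegL S → ∀ t, t ≠ [] → fS S (e t) = if t ∈ S then 1 else 0)
    {F : Finset (Finset (List ℕ))} (hF : AdmissibleL F) (σ : Finset (List ℕ) → ℝ)
    {l : List ℕ →₀ ℝ} (hl : l [] = 0) :
    (∑ S ∈ F, σ S • fS S) (∑ t ∈ l.support, l t • e t) = ∑ S ∈ F, σ S * ∑ t ∈ S, l t := by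
  simp only [FunLike.coe_sum, Finset.sum_apply, FunLike.coe_smul, Pi.smul_apply, smul_eq_mul]
  exact Finset.sum_congr rfl fun S hS => congrArg _ <|
    apply_sum_smul_eq_sum_of_apply_eq_indicator (fS S : X →ₗ[ℝ] ℝ) (hfS S (hF.segL hS)) hl

theorem stmt13_general (X : Type*) [NormedAddCommGroup X] [NormedSpace ℝ X]
    (e : List ℕ → X)
    (hnorm : ∀ x : (List ℕ) →₀ ℝ, x [] = 0 → ‖∑ t ∈ x.support, x t • e t‖ = jhInfNorm x)
    (hdense : Dense (Submodule.span ℝ (e '' {t : List ℕ | t ≠ []}) : Set X))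
    (fS : Finset (List ℕ) → (X →L[ℝ] ℝ))
    (hfS : ∀ S : Finset (List ℕ), SegL S → ∀ t : List ℕ, t ≠ [] →
      fS S (e t) = if t ∈ S then 1 else 0)
    (A : Set (X →L[ℝ] ℝ))
    (hA : A = {g : X →L[ℝ] ℝ | ∃ (F : Finset (Finset (List ℕ)))
        (σ : Finset (List ℕ) → ℝ), AdmissibleL F ∧ (∀ S ∈ F, ([] : List ℕ) ∉ S) ∧
        (∀ S ∈ F, σ S = 1 ∨ σ S = -1) ∧ g = ∑ S ∈ F, σ S • fS S}) :
    A ⊆ closedBall (0 : X →L[ℝ] ℝ) 1 ∧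
    (∀ x : X, ∀ ε : ℝ, 0 < ε → ∃ g ∈ A, g x > ‖x‖ - ε) ∧
    closure (StrongDual.toWeakDual '' (convexHull ℝ A)) =
      StrongDual.toWeakDual '' (closedBall (0 : X →L[ℝ] ℝ) 1) := by
  have hball : A ⊆ closedBall 0 1 := by
    rw [hA]
    rintro _ ⟨F, σ, hF, -, hσ, rfl⟩
    refine mem_closedBall_zero_iff.2 (ContinuousLinearMap.opNorm_le_of_dense _ hdense zero_le_one
      fun w hw => ?_)
    obtain ⟨l, hl, rfl⟩ := exists_finsupp_of_mem_span hw
    rw [hF.sum_smul_apply_sum_smul hfS σ hl, hnorm l hl, one_mul, Real.norm_eq_abs]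
    exact hF.abs_sum_sign_mul_le_jhInfNorm hσ l
  have hnorming : ∀ x : X, ∀ ε > 0, ∃ g ∈ A, ‖x‖ - ε < g x := by
    refine exists_lt_apply_of_dense hball hdense fun w hw ε hε => ?_
    obtain ⟨l, hl, rfl⟩ := exists_finsupp_of_mem_span hw
    obtain ⟨F, σ, hF, hroot, hσ, hlt⟩ := exists_admissibleL_nil_notMem_lt_sum_sign_mul l hl hε
    refine ⟨∑ S ∈ F, σ S • fS S, hA ▸ ⟨F, σ, hF, hroot, hσ, rfl⟩, ?_⟩
    rwa [hF.sum_smul_apply_sum_smul hfS σ hl, hnorm l hl]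
  exact ⟨hball, hnorming, closure_toWeakDual_convexHull_eq_closedBall hball hnorming⟩

/-- Let `M` be the hyperplane of `JH_∞` obtained by completing the
finitely supported functions vanishing at the root `∅`. The set `A` of functionals
`Σᵢ λᵢ f_{Sᵢ}`, with `λᵢ ∈ {-1,1}` and `{S₁, …, Sₙ}` an admissible family of segments none
containing `∅`, is contained in `B_{M*}` and is norming; hence `B_{M*}` is the w*-closed
convex hull of `A`. -/
theorem stmt13 (X : Type*) [NormedAddCommGroup X] [NormedSpace ℝ X] [CompleteSpace X]
    (e : List ℕ → X)
    (hnorm : ∀ x : (List ℕ) →₀ ℝ, x [] = 0 → ‖∑ t ∈ x.support, x t • e t‖ = jhInfNorm x)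
    (hdense : Dense (Submodule.span ℝ (e '' {t : List ℕ | t ≠ []}) : Set X))
    (fS : Finset (List ℕ) → (X →L[ℝ] ℝ))
    (hfS : ∀ S : Finset (List ℕ), SegL S → ∀ t : List ℕ, t ≠ [] →
      fS S (e t) = if t ∈ S then 1 else 0)
    (A : Set (X →L[ℝ] ℝ))
    (hA : A = {g : X →L[ℝ] ℝ | ∃ (F : Finset (Finset (List ℕ)))
        (σ : Finset (List ℕ) → ℝ), AdmissibleL F ∧ (∀ S ∈ F, ([] : List ℕ) ∉ S) ∧
        (∀ S ∈ F, σ S = 1 ∨ σ S = -1) ∧ g = ∑ S ∈ F, σ S • fS S}) :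
    A ⊆ closedBall (0 : X →L[ℝ] ℝ) 1 ∧
    (∀ x : X, ∀ ε : ℝ, 0 < ε → ∃ g ∈ A, g x > ‖x‖ - ε) ∧
    closure (StrongDual.toWeakDual '' (convexHull ℝ A)) =
      StrongDual.toWeakDual '' (closedBall (0 : X →L[ℝ] ℝ) 1) :=
  stmt13_general X e hnorm hdense fS hfS A hA
end
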